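/- Let R be a ring in which 2 is a unit, M a free left R-module of rank 2, and p₀, p₁, p₂ three mutually distant points of P(M). Then there exists a unique point p₃ ∈ P(M) with (p₀,p₁,p₂,p₃) harmonic (uniqueness of the fourth harmonic point). -/

import Mathlib

/-- A point of the projective line over `M`: a cyclic submodule generated by an
admissible element, i.e. by the first vector of some two-element basis. -/
def IsPoint (R M : Type*) [Ring R] [AddCommGroup M] [Module R M]
    (p : Submodule R M) : Prop :=
  ∃ g : Module.Basis (Fin 2) R M, p = Submodule.span R {g 0}

/-- Harmonic quadruple of points of the projective line over `M`. -/
def Harm (R M : Type*) [Ring R] [AddCommGroup M] [Module R M]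
    (p₀ p₁ p₂ p₃ : Submodule R M) : Prop :=
  ∃ g : Module.Basis (Fin 2) R M,
    p₀ = Submodule.span R {g 0} ∧ p₁ = Submodule.span R {g 1} ∧
    p₂ = Submodule.span R {g 0 + g 1} ∧ p₃ = Submodule.span R {g 0 - g 1}

/-!
Write `p₀ = R ∙ e`, `p₁ = R ∙ b`, `p₂ = R ∙ c` with `e, b, c` admissible, hence torsion-free.
Distance of `p₀, p₁` makes `(e, b)` a basis, so `c = A • e + B • b`; distance of `p₀, p₂`
(resp. `p₁, p₂`) makes `B` (resp. `A`) a unit. Then `(A • e, B • b)` is a basis adapted to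
`p₀, p₁, p₂`, and its difference spans a fourth harmonic point. If `(x, y)` and `(x', y')` are two
adapted bases, then `x' = a • x`, `y' = b • y` and `x' + y' = d • (x + y)`; independence of `(x, y)`
forces `a = b = d`, so `x' - y' = d • (x - y)`, and by symmetry both differences span the same point.
-/

open Submodule

section

variable {R M : Type*} [Ring R] [AddCommGroup M] [Module R M]

lemma Module.Basis.linearIndependent_pair (g : Module.Basis (Fin 2) R M) :
    LinearIndependent R ![g 0, g 1] := by
  convert g.linearIndependent
  ext i
  fin_cases i <;> rfl

lemma Module.Basis.eq_zero_of_smul_eq_zero {ι : Type*} (g : Module.Basis ι R M) (i : ι) (r : R)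
    (h : r • g i = 0) : r = 0 := by
  simpa using congr(g.repr $h i)

lemma linearIndependent_pair_of_disjoint {x y : M} (hx : ∀ r : R, r • x = 0 → r = 0)
    (hy : ∀ r : R, r • y = 0 → r = 0) (h : Disjoint (R ∙ x) (R ∙ y)) :
    LinearIndependent R ![x, y] := by
  refine LinearIndependent.pair_iff.mpr fun s t hst => ?_
  have hsx : s • x = 0 := by
    refine disjoint_def.mp h _ (smul_mem _ _ (mem_span_singleton_self x)) ?_
    rw [eq_neg_of_add_eq_zero_left hst]
    exact neg_mem (smul_mem _ _ (mem_span_singleton_self y))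
  exact ⟨hx s hsx, hy t (by rwa [hsx, zero_add] at hst)⟩

lemma span_pair_eq_top_of_codisjoint {x y : M} (h : Codisjoint (R ∙ x) (R ∙ y)) :
    span R {x, y} = ⊤ := by
  rw [span_insert, codisjoint_iff.mp h]

lemma exists_smul_add_smul_eq_of_codisjoint {x y : M} (h : Codisjoint (R ∙ x) (R ∙ y)) (z : M) :
    ∃ a b : R, a • x + b • y = z :=
  mem_span_pair.mp (by simp [span_pair_eq_top_of_codisjoint h])

/-- `s` is a left inverse of `B` by independence of `(e, b)` and a right inverse by independence
of `(e, c)`. -/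
lemma isUnit_of_smul_add_smul_eq {e b c : M} {A B r s : R}
    (heb : LinearIndependent R ![e, b]) (hec : LinearIndependent R ![e, c])
    (hc : A • e + B • b = c) (hb : r • e + s • c = b) : IsUnit B := by
  have hsB : s * B = 1 := by
    refine (heb.eq_of_pair (s := r + s * A) (s' := 0) ?_).2
    rw [zero_smul, zero_add, one_smul]
    conv_rhs => rw [← hb, ← hc]
    simp only [add_smul, mul_smul, smul_add]
    abel
  have hBs : B * s = 1 := by
    refine (hec.eq_of_pair (s := A + B * r) (s' := 0) ?_).2
    rw [zero_smul, zero_add, one_smul]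
    conv_rhs => rw [← hc, ← hb]
    simp only [add_smul, mul_smul, smul_add]
    abel
  exact ⟨⟨B, s, hBs, hsB⟩, rfl⟩

lemma sub_mem_span_sub_of_add_mem_span_add {x y x' y' : M} (hxy : LinearIndependent R ![x, y])
    (hx : x' ∈ R ∙ x) (hy : y' ∈ R ∙ y) (hsum : x' + y' ∈ R ∙ (x + y)) :
    x' - y' ∈ R ∙ (x - y) := by
  obtain ⟨a, rfl⟩ := mem_span_singleton.mp hx
  obtain ⟨b, rfl⟩ := mem_span_singleton.mp hy
  obtain ⟨d, hd⟩ := mem_span_singleton.mp hsum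
  obtain ⟨rfl, rfl⟩ := hxy.eq_of_pair (hd.symm.trans (smul_add d x y))
  exact mem_span_singleton.mpr ⟨_, smul_sub _ x y⟩

lemma Harm.fourth_unique {p₀ p₁ p₂ p₃ q₃ : Submodule R M} (hp : Harm R M p₀ p₁ p₂ p₃)
    (hq : Harm R M p₀ p₁ p₂ q₃) : p₃ = q₃ := by
  have key : ∀ {g h : Module.Basis (Fin 2) R M}, R ∙ h 0 = R ∙ g 0 → R ∙ h 1 = R ∙ g 1 →
      R ∙ (h 0 + h 1) = R ∙ (g 0 + g 1) → R ∙ (h 0 - h 1) ≤ R ∙ (g 0 - g 1) := by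
    intro g h h0 h1 h2
    rw [span_singleton_le_iff_mem]
    refine sub_mem_span_sub_of_add_mem_span_add g.linearIndependent_pair ?_ ?_ ?_ <;>
      simp only [← h0, ← h1, ← h2, mem_span_singleton_self]
  obtain ⟨g, rfl, rfl, rfl, rfl⟩ := hp
  obtain ⟨h, h0, h1, h2, rfl⟩ := hq
  exact le_antisymm (key h0 h1 h2) (key h0.symm h1.symm h2.symm)

lemma exists_harm {p₀ p₁ p₂ : Submodule R M}
    (hp₀ : IsPoint R M p₀) (hp₁ : IsPoint R M p₁) (hp₂ : IsPoint R M p₂)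
    (h01 : IsCompl p₀ p₁) (h02 : IsCompl p₀ p₂) (h12 : IsCompl p₁ p₂) :
    ∃ p₃, Harm R M p₀ p₁ p₂ p₃ := by
  obtain ⟨g₀, rfl⟩ := hp₀
  obtain ⟨g₁, rfl⟩ := hp₁
  obtain ⟨g₂, rfl⟩ := hp₂
  have he := g₀.eq_zero_of_smul_eq_zero 0
  have hb := g₁.eq_zero_of_smul_eq_zero 0
  have hc := g₂.eq_zero_of_smul_eq_zero 0
  obtain ⟨A, B, hcAB⟩ := exists_smul_add_smul_eq_of_codisjoint h01.codisjoint (g₂ 0)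
  obtain ⟨r, s, hbrs⟩ := exists_smul_add_smul_eq_of_codisjoint h02.codisjoint (g₁ 0)
  obtain ⟨r', s', hers⟩ := exists_smul_add_smul_eq_of_codisjoint h12.codisjoint (g₀ 0)
  have heb := linearIndependent_pair_of_disjoint he hb h01.disjoint
  have hB : IsUnit B := isUnit_of_smul_add_smul_eq heb
    (linearIndependent_pair_of_disjoint he hc h02.disjoint) hcAB hbrs
  have hA : IsUnit A := isUnit_of_smul_add_smul_eq (LinearIndependent.pair_symm_iff.mp heb)
    (linearIndependent_pair_of_disjoint hb hc h12.disjoint) (by rw [add_comm, hcAB]) hers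
  let f : Module.Basis (Fin 2) R M := .mk heb <| by
    rw [Matrix.range_cons_cons_empty, span_pair_eq_top_of_codisjoint h01.codisjoint]
  refine ⟨_, f.unitsSMul ![hA.unit, hB.unit], ?_, ?_, ?_, rfl⟩ <;>
    simp [f, Module.Basis.unitsSMul_apply, hcAB, span_singleton_smul_eq, hA, hB]

end

theorem fourth_harmonic_point_unique_general (R M : Type*) [Ring R] [AddCommGroup M] [Module R M]
    (p₀ p₁ p₂ : Submodule R M)
    (hp₀ : IsPoint R M p₀) (hp₁ : IsPoint R M p₁) (hp₂ : IsPoint R M p₂)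
    (h01 : IsCompl p₀ p₁) (h02 : IsCompl p₀ p₂) (h12 : IsCompl p₁ p₂) :
    ∃! p₃ : Submodule R M, Harm R M p₀ p₁ p₂ p₃ := by
  obtain ⟨p₃, hp₃⟩ := exists_harm hp₀ hp₁ hp₂ h01 h02 h12
  exact ⟨p₃, hp₃, fun q hq => hq.fourth_unique hp₃⟩

/-- Uniqueness of the fourth harmonic point: if `2 ∈ R*` and `p₀,p₁,p₂` are three
mutually distant points of the projective line over `M`, then there is a unique
point `p₃` with `(p₀,p₁,p₂,p₃)` harmonic. -/
theorem fourth_harmonic_point_unique (R M : Type*) [Ring R] [AddCommGroup M] [Module R M]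
    (h2 : IsUnit (2 : R)) (p₀ p₁ p₂ : Submodule R M)
    (hp₀ : IsPoint R M p₀) (hp₁ : IsPoint R M p₁) (hp₂ : IsPoint R M p₂)
    (h01 : IsCompl p₀ p₁) (h02 : IsCompl p₀ p₂) (h12 : IsCompl p₁ p₂) :
    ∃! p₃ : Submodule R M, Harm R M p₀ p₁ p₂ p₃ :=
  fourth_harmonic_point_unique_general R M p₀ p₁ p₂ hp₀ hp₁ hp₂ h01 h02 h12
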